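/- Let m^(1),...,m^(N) be N distinct multisets over a set X. Then there exists a subset A of X with cardinality at most N such that the restrictions m^(1)|_A, ..., m^(N)|_A are pairwise distinct. -/

import Mathlib

/-!
Add the multisets one at a time. If `A` already separates `m⁽¹⁾, …, m⁽ᵏ⁾`, then on `A` the new
multiset `m⁽ᵏ⁺¹⁾` can coincide with at most one of them, since those are pairwise distinct on `A`;
adding to `A` a single point where the two differ separates all `k + 1` multisets.
-/

open Finset Set

section Separates

variable {X β : Type*}

def Separates (A : Set X) (s : Set (X → β)) : Prop :=
  ∀ f ∈ s, ∀ g ∈ s, EqOn f g A → f = g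

theorem Separates.mono {A B : Set X} {s : Set (X → β)} (hA : Separates A s) (hAB : A ⊆ B) :
    Separates B s := fun f hf g hg hfg => hA f hf g hg (hfg.mono hAB)

theorem Separates.insert_of_forall_not_eqOn {A : Set X} {s : Set (X → β)} {f : X → β}
    (hA : Separates A s) (hf : ∀ g ∈ s, ¬EqOn f g A) : Separates A (insert f s) := by
  rintro g (rfl | hg) h (rfl | hh) hgh
  · rfl
  · exact absurd hgh (hf h hh)
  · exact absurd hgh.symm (hf g hg)
  · exact hA g hg h hh hgh

theorem Separates.insert_of_eqOn {A : Set X} {s : Set (X → β)} {f g : X → β}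
    (hA : Separates A s) (hg : g ∈ s) (hfg : EqOn f g A) {x : X} (hx : f x ≠ g x) :
    Separates (insert x A) (insert f s) := by
  refine (hA.mono (subset_insert x A)).insert_of_forall_not_eqOn fun h hh hfh => hx ?_
  have hhg : h = g := hA h hh g hg ((hfh.mono (subset_insert x A)).symm.trans hfg)
  exact hhg ▸ hfh (mem_insert x A)

theorem exists_card_le_separates (s : Finset (X → β)) :
    ∃ A : Finset X, #A ≤ #s ∧ Separates (A : Set X) (s : Set (X → β)) := by
  classical
  induction s using Finset.induction_on with
  | empty => exact ⟨∅, by simp, by simp [Separates]⟩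
  | @insert f s hf ih =>
    obtain ⟨A, hAcard, hA⟩ := ih
    rw [card_insert_of_notMem hf, Finset.coe_insert]
    by_cases hcoll : ∃ g ∈ s, EqOn f g A
    · obtain ⟨g, hg, hfg⟩ := hcoll
      obtain ⟨x, hx⟩ := Function.ne_iff.1 (ne_of_mem_of_not_mem hg hf).symm
      refine ⟨insert x A, (card_insert_le x A).trans (by omega), ?_⟩
      rw [Finset.coe_insert]
      exact hA.insert_of_eqOn hg hfg hx
    · push Not at hcoll
      exact ⟨A, by omega, hA.insert_of_forall_not_eqOn hcoll⟩

end Separates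

/-- Given N distinct multisets (multiplicity functions) over X, there is a
subset A of X of cardinality at most N such that the restrictions to A are pairwise
distinct. -/
theorem distinct_restriction_of_distinct_multisets
    {X : Type*} [DecidableEq X] (N : ℕ) (m : Fin N → X → ℕ)
    (hm : Function.Injective m) :
    ∃ A : Finset X, A.card ≤ N ∧
      Function.Injective (fun i : Fin N => fun x : X => if x ∈ A then m i x else 0) := by
  classical
  obtain ⟨A, hAcard, hA⟩ := exists_card_le_separates (univ.image m)
  refine ⟨A, hAcard.trans (card_image_le.trans (by simp)), fun i j hij => hm ?_⟩
  refine hA _ (by simp) _ (by simp) fun x hx => ?_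
  simpa [Finset.mem_coe.1 hx] using congrFun hij x
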